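/- Let x_1, …, x_n be real, S_F = diag(e^{i x_1}, …, e^{i x_n}) ∈ ℂ^{n×n}, R ∈ ℂ^{n×n} the diagonal matrix with R_{kk} = (1 − e^{−i x_k})/|1 − e^{−i x_k}| if e^{−i x_k} ≠ 1 and R_{kk} = i otherwise, and M ∈ ℝ^{n×m} a real matrix. Set Θ = R M, B̂ = [Re(Θ) | −Im(Θ)] ∈ ℝ^{n×2m}, and let Q = (1/√2)[[I_m, i I_m],[I_m, −i I_m]] ∈ ℂ^{2m×2m}. Suppose B̂ V̂_B = Û_B Ŝ_B is a real singular value decomposition with V̂_Bᵀ V̂_B = I, Û_Bᵀ Û_B = I, and Ŝ_B diagonal with decreasing nonnegative entries. Write γ̃ = Q V̂_B e_{2m} = [α̃; β̃] with α̃, β̃ ∈ ℂ^m, where e_{2m} is the last standard basis vector. Then (1) γ̃ is a unit vector attaining the minimum of ‖[M | −S_F M] v‖_2 over all unit vectors v ∈ ℂ^{2m}, and (2) α̃_j = conj(β̃_j) for j = 1, …, m. -/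

import Mathlib

/-!
Multiplying by the unitary diagonal matrix `R` does not change norms, and because
`conj R_kk = -R_kk e^{i x_k}` it turns `[M | -S_F M]` into `[Θ | conj Θ]`, which is
`√2 · B̂ Qᴴ` for the unitary `Q`. Hence `‖[M | -S_F M] v‖ = √2 ‖B̂ (Qᴴ v)‖`, and minimizing over
unit `v` is minimizing `‖B̂ w‖` over unit `w = Qᴴ v`; the real SVD shows that the right singular
vector `V̂_B e_{2m}` of the smallest singular value does this, so `γ̃ = Q V̂_B e_{2m}` minimizes
the original problem. Conjugate symmetry holds because `Q` maps real vectors to conjugate pairs.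
-/

open Matrix ComplexConjugate

section SumNormSq

variable {ι ι' κ : Type*}

theorem sum_norm_sq_eq_re_star_dotProduct [Fintype ι] (v : ι → ℂ) :
    ∑ i, ‖v i‖ ^ 2 = (star v ⬝ᵥ v).re := by
  simp [dotProduct, Complex.sq_norm, Complex.normSq_apply]

theorem sum_norm_sq_mulVec_of_conjTranspose_mul_self [Fintype ι] [Fintype κ] [DecidableEq κ]
    {A : Matrix ι κ ℂ} (hA : Aᴴ * A = 1) (v : κ → ℂ) : ∑ i, ‖(A *ᵥ v) i‖ ^ 2 = ∑ i, ‖v i‖ ^ 2 := by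
  rw [sum_norm_sq_eq_re_star_dotProduct, sum_norm_sq_eq_re_star_dotProduct, star_mulVec,
    dotProduct_mulVec, vecMul_vecMul, hA, vecMul_one]

theorem conjTranspose_conjTranspose_mul_conjTranspose_eq_one [Fintype κ] [DecidableEq κ]
    {A : Matrix κ κ ℂ} (hA : Aᴴ * A = 1) : Aᴴᴴ * Aᴴ = 1 := by
  rw [conjTranspose_conjTranspose, mul_eq_one_comm.mp hA]

theorem conjTranspose_diagonal_mul_self [Fintype ι] [DecidableEq ι] {d : ι → ℂ}
    (hd : ∀ i, ‖d i‖ = 1) :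
    (diagonal d)ᴴ * diagonal d = 1 := by
  rw [diagonal_conjTranspose, diagonal_mul_diagonal, ← diagonal_one]
  congr 1
  ext i
  simp [Complex.conj_mul', hd i]

theorem map_ofReal_mul {α : Type*} [Fintype κ] (A : Matrix ι' κ ℝ) (B : Matrix κ α ℝ) :
    (A * B).map ((↑) : ℝ → ℂ) = A.map ((↑) : ℝ → ℂ) * B.map ((↑) : ℝ → ℂ) :=
  Matrix.map_mul (f := Complex.ofRealHom)

theorem conjTranspose_map_ofReal_mul_self [Fintype ι] [DecidableEq κ] {A : Matrix ι κ ℝ}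
    (hA : Aᵀ * A = 1) : (A.map ((↑) : ℝ → ℂ))ᴴ * A.map ((↑) : ℝ → ℂ) = 1 := by
  rw [← conjTranspose_map _ fun a => (Complex.conj_ofReal a).symm,
    conjTranspose_eq_transpose_of_trivial, ← map_ofReal_mul, hA]
  exact Matrix.map_one _ Complex.ofReal_zero Complex.ofReal_one

theorem sq_le_sum_sq_mul_of_le [Fintype κ] {σ w : κ → ℝ} {c : κ} (hσc : 0 ≤ σ c)
    (hmin : ∀ i, σ c ≤ σ i) (hw : ∀ i, 0 ≤ w i) (hw1 : ∑ i, w i = 1) :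
    σ c ^ 2 ≤ ∑ i, σ i ^ 2 * w i :=
  calc σ c ^ 2 = ∑ i, σ c ^ 2 * w i := by rw [← Finset.mul_sum, hw1, mul_one]
    _ ≤ ∑ i, σ i ^ 2 * w i := Finset.sum_le_sum fun i _ =>
      mul_le_mul_of_nonneg_right (pow_le_pow_left₀ hσc (hmin i) 2) (hw i)

end SumNormSq

section UnitMinimizer

variable {ι ι' κ : Type*} [Fintype ι] [Fintype κ]

def IsUnitMinimizer (A : Matrix ι κ ℂ) (γ : κ → ℂ) : Prop :=
  (∑ i, ‖γ i‖ ^ 2 = 1) ∧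
    ∀ v : κ → ℂ, (∑ i, ‖v i‖ ^ 2 = 1) → ∑ k, ‖(A *ᵥ γ) k‖ ^ 2 ≤ ∑ k, ‖(A *ᵥ v) k‖ ^ 2

theorem isUnitMinimizer_mul_left_iff [Fintype ι'] [DecidableEq ι] {U : Matrix ι' ι ℂ}
    (hU : Uᴴ * U = 1) {A : Matrix ι κ ℂ} {γ : κ → ℂ} :
    IsUnitMinimizer (U * A) γ ↔ IsUnitMinimizer A γ := by
  simp only [IsUnitMinimizer, ← mulVec_mulVec, sum_norm_sq_mulVec_of_conjTranspose_mul_self hU]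

theorem IsUnitMinimizer.smul {A : Matrix ι κ ℂ} {γ : κ → ℂ} (h : IsUnitMinimizer A γ) (c : ℂ) :
    IsUnitMinimizer (c • A) γ := by
  have hsmul : ∀ v : κ → ℂ, ∑ k, ‖((c • A) *ᵥ v) k‖ ^ 2 = ‖c‖ ^ 2 * ∑ k, ‖(A *ᵥ v) k‖ ^ 2 := by
    intro v
    simp only [smul_mulVec, Pi.smul_apply, smul_eq_mul, norm_mul, mul_pow, Finset.mul_sum]
  refine ⟨h.1, fun v hv => ?_⟩
  rw [hsmul, hsmul]
  exact mul_le_mul_of_nonneg_left (h.2 v hv) (by positivity)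

theorem IsUnitMinimizer.mul_conjTranspose [DecidableEq κ] {A : Matrix ι κ ℂ} {γ : κ → ℂ}
    (h : IsUnitMinimizer A γ) {Q : Matrix κ κ ℂ} (hQ : Qᴴ * Q = 1) :
    IsUnitMinimizer (A * Qᴴ) (Q *ᵥ γ) := by
  have hQ' := conjTranspose_conjTranspose_mul_conjTranspose_eq_one hQ
  refine ⟨by rw [sum_norm_sq_mulVec_of_conjTranspose_mul_self hQ, h.1], fun v hv => ?_⟩
  rw [← mulVec_mulVec, mulVec_mulVec _ Qᴴ, hQ, one_mulVec, ← mulVec_mulVec]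
  exact h.2 _ (by rw [sum_norm_sq_mulVec_of_conjTranspose_mul_self hQ', hv])

theorem sum_norm_sq_ofReal_mulVec_eq_of_svd [DecidableEq κ] {B U : Matrix ι κ ℝ}
    {V : Matrix κ κ ℝ} {σ : κ → ℝ} (hsvd : B * V = U * diagonal σ) (hV : Vᵀ * V = 1)
    (hU : Uᵀ * U = 1) (w : κ → ℂ) :
    ∑ k, ‖(B.map ((↑) : ℝ → ℂ) *ᵥ w) k‖ ^ 2 =
      ∑ i, σ i ^ 2 * ‖((V.map ((↑) : ℝ → ℂ))ᴴ *ᵥ w) i‖ ^ 2 := by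
  set Vc := V.map ((↑) : ℝ → ℂ)
  have hsvdc :
      B.map ((↑) : ℝ → ℂ) * Vc = U.map ((↑) : ℝ → ℂ) * diagonal fun i => (σ i : ℂ) := by
    rw [← map_ofReal_mul, hsvd, map_ofReal_mul, diagonal_map Complex.ofReal_zero]
  have hw : B.map ((↑) : ℝ → ℂ) *ᵥ w =
      U.map ((↑) : ℝ → ℂ) *ᵥ (diagonal (fun i => (σ i : ℂ)) *ᵥ (Vcᴴ *ᵥ w)) := by
    rw [mulVec_mulVec, mulVec_mulVec, ← hsvdc, Matrix.mul_assoc,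
      mul_eq_one_comm.mp (conjTranspose_map_ofReal_mul_self hV), Matrix.mul_one]
  rw [hw, sum_norm_sq_mulVec_of_conjTranspose_mul_self (conjTranspose_map_ofReal_mul_self hU)]
  simp only [mulVec_diagonal, norm_mul, mul_pow, Complex.norm_real, Real.norm_eq_abs, sq_abs]

theorem isUnitMinimizer_of_svd [DecidableEq κ] {B U : Matrix ι κ ℝ} {V : Matrix κ κ ℝ}
    {σ : κ → ℝ} (hsvd : B * V = U * diagonal σ) (hV : Vᵀ * V = 1) (hU : Uᵀ * U = 1) {c : κ}
    (hσc : 0 ≤ σ c) (hmin : ∀ i, σ c ≤ σ i) :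
    IsUnitMinimizer (B.map ((↑) : ℝ → ℂ)) fun i => (V i c : ℂ) := by
  have hVc := conjTranspose_map_ofReal_mul_self hV
  have hcol : (fun i => (V i c : ℂ)) = V.map ((↑) : ℝ → ℂ) *ᵥ Pi.single c 1 := by
    rw [mulVec_single_one]; rfl
  refine ⟨?_, fun v hv => ?_⟩
  · rw [hcol, sum_norm_sq_mulVec_of_conjTranspose_mul_self hVc]
    simp [Pi.single_apply, apply_ite]
  · rw [sum_norm_sq_ofReal_mulVec_eq_of_svd hsvd hV hU,
      sum_norm_sq_ofReal_mulVec_eq_of_svd hsvd hV hU, hcol, mulVec_mulVec, hVc, one_mulVec]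
    have hσc2 : ∑ i, σ i ^ 2 * ‖(Pi.single c 1 : κ → ℂ) i‖ ^ 2 = σ c ^ 2 := by
      simp [Pi.single_apply, apply_ite]
    rw [hσc2]
    refine sq_le_sum_sq_mul_of_le hσc hmin (fun _ => by positivity) ?_
    rw [sum_norm_sq_mulVec_of_conjTranspose_mul_self
      (conjTranspose_conjTranspose_mul_conjTranspose_eq_one hVc), hv]

end UnitMinimizer

/-- The matrix `Q`; it sends a real vector `(a, b)` to `(a + i b, a - i b) / √2`. -/
noncomputable def conjPairMatrix (κ : Type*) [DecidableEq κ] : Matrix (κ ⊕ κ) (κ ⊕ κ) ℂ :=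
  ((Real.sqrt 2 : ℂ))⁻¹ • fromBlocks (1 : Matrix κ κ ℂ) (Complex.I • 1) 1 (-(Complex.I • 1))

section ConjPairMatrix

variable {ι κ : Type*} [Fintype κ] [DecidableEq κ]

theorem conjPairMatrix_conjTranspose_mul_self :
    (conjPairMatrix κ)ᴴ * conjPairMatrix κ = 1 := by
  have hs : ((Real.sqrt 2 : ℂ)⁻¹) ^ 2 = 2⁻¹ := by
    rw [inv_pow, ← Complex.ofReal_pow, Real.sq_sqrt zero_le_two, Complex.ofReal_ofNat]
  ext (i | i) (j | j) <;>
    simp [conjPairMatrix, mul_apply, Fintype.sum_sum_type, one_apply, apply_ite (starRingEnd ℂ),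
      @eq_comm _ j i]
  all_goals split_ifs <;> ring_nf; simp [hs]

theorem conjPairMatrix_mulVec_ofReal_inl (u : κ ⊕ κ → ℝ) (j : κ) :
    (conjPairMatrix κ *ᵥ fun i => (u i : ℂ)) (Sum.inl j) =
      conj ((conjPairMatrix κ *ᵥ fun i => (u i : ℂ)) (Sum.inr j)) := by
  simp [conjPairMatrix, mulVec, dotProduct, Fintype.sum_sum_type, one_apply]

theorem ofReal_mul_conjTranspose_conjPairMatrix [Fintype ι] {Θ : Matrix ι κ ℂ}
    {B : Matrix ι (κ ⊕ κ) ℝ} (hl : ∀ k j, B k (Sum.inl j) = (Θ k j).re)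
    (hr : ∀ k j, B k (Sum.inr j) = -(Θ k j).im) :
    B.map ((↑) : ℝ → ℂ) * (conjPairMatrix κ)ᴴ =
      ((Real.sqrt 2 : ℂ))⁻¹ • fromCols Θ (Θ.map conj) := by
  ext k (j | j) <;> simp [conjPairMatrix, mul_apply, Fintype.sum_sum_type, one_apply, hl, hr,
    apply_ite (starRingEnd ℂ)]
  · linear_combination (Real.sqrt 2 : ℂ)⁻¹ * Complex.re_add_im (Θ k j)
  · rw [← Complex.re_add_im (conj (Θ k j)), Complex.conj_re, Complex.conj_im]
    push_cast
    ring

end ConjPairMatrix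

/-- The diagonal entry `R_kk` as a function of `x_k`. -/
noncomputable def phaseFactor (t : ℝ) : ℂ :=
  if Complex.exp (-(Complex.I * (t : ℝ))) ≠ 1 then
    (1 - Complex.exp (-(Complex.I * (t : ℝ)))) / (‖1 - Complex.exp (-(Complex.I * (t : ℝ)))‖ : ℂ)
  else Complex.I

theorem norm_phaseFactor (t : ℝ) : ‖phaseFactor t‖ = 1 := by
  unfold phaseFactor
  split_ifs with h
  · rw [norm_div, Complex.norm_real, norm_norm,
      div_self (norm_ne_zero_iff.mpr (sub_ne_zero.mpr (Ne.symm h)))]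
  · simp

theorem conj_phaseFactor (t : ℝ) :
    conj (phaseFactor t) = -phaseFactor t * Complex.exp (Complex.I * t) := by
  have hconj : conj (Complex.exp (-(Complex.I * t))) = Complex.exp (Complex.I * t) := by
    rw [← Complex.exp_conj]; simp
  have hprod : Complex.exp (-(Complex.I * t)) * Complex.exp (Complex.I * t) = 1 := by
    rw [← Complex.exp_add, neg_add_cancel, Complex.exp_zero]
  unfold phaseFactor
  split_ifs with h
  · rw [map_div₀, Complex.conj_ofReal, map_sub, map_one, hconj, neg_mul, div_mul_eq_mul_div,
      ← neg_div]
    congr 1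
    linear_combination -hprod
  · have hexp : Complex.exp (Complex.I * t) = 1 := by
      rw [← hprod, not_not.mp h, one_mul]
    simp [hexp]

theorem diagonal_phaseFactor_mul_eq_fromCols {ι κ : Type*} [Fintype ι] [DecidableEq ι]
    {x : ι → ℝ} {M : Matrix ι κ ℝ} {Θ : Matrix ι κ ℂ}
    (hΘ : Θ = diagonal (fun k => phaseFactor (x k)) * M.map ((↑) : ℝ → ℂ))
    {BM : Matrix ι (κ ⊕ κ) ℂ} (hl : ∀ k j, BM k (Sum.inl j) = M k j)
    (hr : ∀ k j, BM k (Sum.inr j) = -Complex.exp (Complex.I * x k) * M k j) :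
    diagonal (fun k => phaseFactor (x k)) * BM = fromCols Θ (Θ.map conj) := by
  subst hΘ
  ext k (j | j)
  · simp [diagonal_mul, hl]
  · simp [diagonal_mul, hr, conj_phaseFactor]
    ring

theorem stmt_9 (m n : ℕ) (hm : 0 < m)
    (x : Fin n → ℝ)
    (R : Matrix (Fin n) (Fin n) ℂ)
    (hR : R = Matrix.diagonal fun k =>
      if Complex.exp (-(Complex.I * (x k : ℝ))) ≠ 1 then
        (1 - Complex.exp (-(Complex.I * (x k : ℝ))))
          / (‖1 - Complex.exp (-(Complex.I * (x k : ℝ)))‖ : ℂ)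
      else Complex.I)
    (M : Matrix (Fin n) (Fin m) ℝ)
    (Θ : Matrix (Fin n) (Fin m) ℂ)
    (hΘ : Θ = R * M.map (fun a => (a : ℂ)))
    (Bhat : Matrix (Fin n) (Fin m ⊕ Fin m) ℝ)
    (hBhatl : ∀ k j, Bhat k (Sum.inl j) = (Θ k j).re)
    (hBhatr : ∀ k j, Bhat k (Sum.inr j) = -(Θ k j).im)
    (Q : Matrix (Fin m ⊕ Fin m) (Fin m ⊕ Fin m) ℂ)
    (hQ : Q = ((Real.sqrt 2 : ℂ))⁻¹ •
      Matrix.fromBlocks (1 : Matrix (Fin m) (Fin m) ℂ) (Complex.I • 1) 1 (-(Complex.I • 1)))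
    -- the concatenated matrix [M | -S_F M]:
    (BM : Matrix (Fin n) (Fin m ⊕ Fin m) ℂ)
    (hBMl : ∀ k j, BM k (Sum.inl j) = ((M k j : ℝ) : ℂ))
    (hBMr : ∀ k j, BM k (Sum.inr j) = -Complex.exp (Complex.I * (x k : ℝ)) * ((M k j : ℝ) : ℂ))
    -- real singular value decomposition of B̂ with decreasing nonnegative singular values,
    -- so that the diagonal entry at the last index is the smallest one:
    (VhatB : Matrix (Fin m ⊕ Fin m) (Fin m ⊕ Fin m) ℝ)
    (UhatB : Matrix (Fin n) (Fin m ⊕ Fin m) ℝ)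
    (σ : Fin m ⊕ Fin m → ℝ)
    (hsvd : Bhat * VhatB = UhatB * Matrix.diagonal σ)
    (hV : VhatBᵀ * VhatB = 1) (hU : UhatBᵀ * UhatB = 1)
    (hσ : ∀ i, 0 ≤ σ i)
    (hσmin : ∀ i, σ (Sum.inr (⟨m - 1, by omega⟩ : Fin m)) ≤ σ i)
    -- γ̃ = Q V̂_B e_{2m}, the column of Q V̂_B at the last index:
    (γtilde : Fin m ⊕ Fin m → ℂ)
    (hγ : γtilde = fun i => (Q * VhatB.map (fun a => (a : ℂ))) i
      (Sum.inr (⟨m - 1, by omega⟩ : Fin m)))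
    (αtilde βtilde : Fin m → ℂ)
    (hα : ∀ j, αtilde j = γtilde (Sum.inl j))
    (hβ : ∀ j, βtilde j = γtilde (Sum.inr j)) :
    ((∑ i, ‖γtilde i‖ ^ 2 = 1) ∧
      ∀ v : Fin m ⊕ Fin m → ℂ, (∑ i, ‖v i‖ ^ 2 = 1) →
        ∑ k, ‖BM.mulVec γtilde k‖ ^ 2 ≤ ∑ k, ‖BM.mulVec v k‖ ^ 2) ∧
    (∀ j, αtilde j = starRingEnd ℂ (βtilde j)) := by
  set c : Fin m ⊕ Fin m := Sum.inr ⟨m - 1, by omega⟩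
  subst hR hQ
  have hRBM : diagonal (fun k => phaseFactor (x k)) * BM =
      (Real.sqrt 2 : ℂ) • (Bhat.map ((↑) : ℝ → ℂ) * (conjPairMatrix (Fin m))ᴴ) := by
    rw [ofReal_mul_conjTranspose_conjPairMatrix hBhatl hBhatr, smul_smul,
      mul_inv_cancel₀ (by simp), one_smul]
    exact diagonal_phaseFactor_mul_eq_fromCols hΘ hBMl hBMr
  have hγ' : γtilde = conjPairMatrix (Fin m) *ᵥ fun i => (VhatB i c : ℂ) := hγ
  refine ⟨?_, fun j => ?_⟩
  · change IsUnitMinimizer BM γtilde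
    rw [← isUnitMinimizer_mul_left_iff
      (conjTranspose_diagonal_mul_self fun k => norm_phaseFactor (x k)), hRBM, hγ']
    exact ((isUnitMinimizer_of_svd hsvd hV hU (hσ c) hσmin).mul_conjTranspose
      conjPairMatrix_conjTranspose_mul_self).smul _
  · rw [hα, hβ, hγ', conjPairMatrix_mulVec_ofReal_inl]
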